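/- Let D : A → A/J be a ℂ-linear map satisfying the Leibniz rule D(f * g) = π(f)·D(g) + D(f)·π(g) for all f, g ∈ A, and let φ(s) = D(δ_s)·π(δ_{s*}). If Υ ∈ A/J is a common fixed point of the representation, i.e. π(δ_s)·Υ·π(δ_{s*}) + φ(s) = Υ for every s ∈ S, then D is the inner derivation implemented by −Υ: D(f) = Υ·π(f) − π(f)·Υ for every f ∈ A. -/

import Mathlib

open MonoidAlgebra

/-- An inverse semigroup: a semigroup in which every element `s` has a unique
generalized inverse `s*` with `s * s* * s = s` and `s* * s * s* = s*`. -/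
class InverseSemigroup (S : Type*) extends Semigroup S where
  star : S → S
  star_left : ∀ s : S, s * star s * s = s
  star_right : ∀ s : S, star s * s * star s = star s
  star_unique : ∀ s t : S, s * t * s = s → t * s * t = t → t = star s

variable (S : Type*) [InverseSemigroup S]

/-- The ℂ-linear span in the semigroup algebra `A = MonoidAlgebra ℂ S` of the set
`{δ_{s e t} - δ_{s t} : s, t ∈ S, e ∈ E}`, where `E = {e : e * e = e}` is the set of
idempotents of `S`. -/
noncomputable def J : Submodule ℂ (MonoidAlgebra ℂ S) :=
  Submodule.span ℂ { x | ∃ s t e : S, e * e = e ∧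
    x = single (s * e * t) (1 : ℂ) - single (s * t) (1 : ℂ) }

variable {S}

theorem mul_mem_J (f : MonoidAlgebra ℂ S) {x : MonoidAlgebra ℂ S} (hx : x ∈ J S) :
    f * x ∈ J S := by
  induction hx using Submodule.span_induction with
  | mem x hx =>
    obtain ⟨s, t, e, he, rfl⟩ := hx
    induction f using MonoidAlgebra.induction_linear with
    | zero => simp
    | add a b ha hb => rw [add_mul]; exact (J S).add_mem ha hb
    | single a b =>
      have : (single a b : MonoidAlgebra ℂ S) *
            (single (s * e * t) (1 : ℂ) - single (s * t) (1 : ℂ))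
          = b • (single ((a * s) * e * t) (1 : ℂ) - single ((a * s) * t) (1 : ℂ)) := by
        rw [mul_sub, single_mul_single, single_mul_single, smul_sub, smul_single', smul_single']
        simp [mul_assoc]
      rw [this]
      exact (J S).smul_mem _ (Submodule.subset_span ⟨a * s, t, e, he, rfl⟩)
  | zero => simp
  | add x y hx hy ihx ihy => rw [mul_add]; exact (J S).add_mem ihx ihy
  | smul c x hx ih => rw [mul_smul_comm]; exact (J S).smul_mem _ ih

theorem J_mul_mem (f : MonoidAlgebra ℂ S) {x : MonoidAlgebra ℂ S} (hx : x ∈ J S) :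
    x * f ∈ J S := by
  induction hx using Submodule.span_induction with
  | mem x hx =>
    obtain ⟨s, t, e, he, rfl⟩ := hx
    induction f using MonoidAlgebra.induction_linear with
    | zero => simp
    | add a b ha hb => rw [mul_add]; exact (J S).add_mem ha hb
    | single a b =>
      have : (single (s * e * t) (1 : ℂ) - single (s * t) (1 : ℂ)) *
            (single a b : MonoidAlgebra ℂ S)
          = b • (single (s * e * (t * a)) (1 : ℂ) - single (s * (t * a)) (1 : ℂ)) := by
        rw [sub_mul, single_mul_single, single_mul_single, smul_sub, smul_single', smul_single']
        simp [mul_assoc]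
      rw [this]
      exact (J S).smul_mem _ (Submodule.subset_span ⟨s, t * a, e, he, rfl⟩)
  | zero => simp
  | add x y hx hy ihx ihy => rw [add_mul]; exact (J S).add_mem ihx ihy
  | smul c x hx ih => rw [smul_mul_assoc]; exact (J S).smul_mem _ ih

/-- Multiplication of cosets in the quotient algebra `A ⧸ J`, well defined
since `J` is a two-sided ideal: `(f + J) * (g + J) = f * g + J`. -/
noncomputable instance : Mul (MonoidAlgebra ℂ S ⧸ J S) :=
  ⟨Quotient.map₂' (· * ·) (by
    intro a₁ a₂ h₁ b₁ b₂ h₂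
    have h₁' : a₁ - a₂ ∈ J S := (Submodule.quotientRel_def (J S)).mp h₁
    have h₂' : b₁ - b₂ ∈ J S := (Submodule.quotientRel_def (J S)).mp h₂
    refine (Submodule.quotientRel_def (J S)).mpr ?_
    have : a₁ * b₁ - a₂ * b₂ = a₁ * (b₁ - b₂) + (a₁ - a₂) * b₂ := by
      rw [mul_sub, sub_mul]; abel
    rw [this]
    exact (J S).add_mem (mul_mem_J _ h₂') (J_mul_mem _ h₁'))⟩

variable (S)

/-- The quotient map `π : A → A ⧸ J`, sending `f` to the coset `f + J`. -/
noncomputable def π : MonoidAlgebra ℂ S → MonoidAlgebra ℂ S ⧸ J S := Submodule.Quotient.mk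

theorem π_mul (f g : MonoidAlgebra ℂ S) : π S (f * g) = π S f * π S g := rfl

variable {S}

/-! Multiplying the fixed-point identity `π(δ_s) Υ π(δ_{s*}) + D(δ_s) π(δ_{s*}) = Υ` on the right
by `π(δ_s)` turns each factor `π(δ_{s*})` into `π(δ_{s*}) π(δ_s) = π(δ_{s* s})`, a right identity
of `A ⧸ J`, leaving `Υ π(δ_s) = π(δ_s) Υ + D(δ_s)`; both sides of the claim are linear in `f`, so this
settles it. That `π(δ_e)` is a right identity for every idempotent `e` rests on the idempotents
of an inverse semigroup commuting, so that `s e = s e (s* s)` exhibits `δ_{s e} - δ_s ∈ J`. -/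

namespace InverseSemigroup

theorem star_eq_self {e : S} (he : IsIdempotentElem e) : star e = e :=
  (star_unique e e (by rw [he.eq, he.eq]) (by rw [he.eq, he.eq])).symm

theorem star_star (s : S) : star (star s) = s :=
  (star_unique (star s) s (star_right s) (star_left s)).symm

theorem mul_star_mul_self (s : S) : s * (star s * s) = s := by
  rw [← mul_assoc, star_left]

theorem isIdempotentElem_star_mul_self (s : S) : IsIdempotentElem (star s * s) := by
  rw [isIdempotentElem_iff, ← mul_assoc, star_right]

/-- With `a = (e f)*`, uniqueness of inverses forces `a = f a e`, which makes `a` idempotent;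
hence `e f = a* = a`. -/
theorem isIdempotentElem_mul {e f : S} (he : IsIdempotentElem e) (hf : IsIdempotentElem f) :
    IsIdempotentElem (e * f) := by
  set a := star (e * f) with ha
  have hefa : e * (f * (a * (e * f))) = e * f := by simpa [mul_assoc] using star_left (e * f)
  have haefa (x : S) : a * (e * (f * (a * x))) = a * x := by
    simpa [mul_assoc] using congrArg (· * x) (star_right (e * f))
  have hfae : f * a * e = a := by
    refine star_unique (e * f) (f * a * e) ?_ ?_
    · simpa [mul_assoc, he.mul_self_mul, hf.mul_self_mul] using hefa
    · simp only [mul_assoc, he.mul_self_mul, hf.mul_self_mul, haefa]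
  have haa : IsIdempotentElem a :=
    calc a * a = f * a * e * (f * a * e) := by rw [hfae]
      _ = f * a * e := by simp only [mul_assoc, haefa]
      _ = a := hfae
  rwa [← star_star (e * f), ← ha, star_eq_self haa]

theorem commute_of_isIdempotentElem {e f : S} (he : IsIdempotentElem e)
    (hf : IsIdempotentElem f) : Commute e f := by
  have hef := isIdempotentElem_mul he hf
  have hfe := isIdempotentElem_mul hf he
  have hinv : f * e = star (e * f) := by
    refine star_unique (e * f) (f * e) ?_ ?_
    · simpa [mul_assoc, he.mul_self_mul, hf.mul_self_mul] using hef.eq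
    · simpa [mul_assoc, he.mul_self_mul, hf.mul_self_mul] using hfe.eq
  exact (star_eq_self hef).symm.trans hinv.symm

theorem mul_mul_star_mul_self {e : S} (he : IsIdempotentElem e) (s : S) :
    s * e * (star s * s) = s * e := by
  rw [mul_assoc, (commute_of_isIdempotentElem he (isIdempotentElem_star_mul_self s)).eq,
    ← mul_assoc, mul_star_mul_self]

end InverseSemigroup

open InverseSemigroup

theorem π_surjective : Function.Surjective (π S) := Submodule.Quotient.mk_surjective _

theorem single_mul_sub_single_mem_J {e : S} (he : IsIdempotentElem e) (s : S) :
    single (s * e) (1 : ℂ) - single s 1 ∈ J S := by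
  have h : single (s * e * (star s * s)) (1 : ℂ) - single (s * (star s * s)) 1 ∈ J S :=
    Submodule.subset_span ⟨s, star s * s, e, he, rfl⟩
  rwa [mul_mul_star_mul_self he, mul_star_mul_self] at h

theorem mul_single_sub_self_mem_J {e : S} (he : IsIdempotentElem e) (f : MonoidAlgebra ℂ S) :
    f * single e 1 - f ∈ J S := by
  induction f using MonoidAlgebra.induction_linear with
  | zero => simp
  | add f g hf hg => simpa only [add_mul, add_sub_add_comm] using (J S).add_mem hf hg
  | single s c =>
    have h : single s c * single e (1 : ℂ) - single s c = c • (single (s * e) 1 - single s 1) := by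
      simp [single_mul_single, smul_sub]
    exact h ▸ (J S).smul_mem c (single_mul_sub_single_mem_J he s)

theorem mul_π_single_of_isIdempotentElem {e : S} (he : IsIdempotentElem e)
    (x : MonoidAlgebra ℂ S ⧸ J S) : x * π S (single e 1) = x := by
  obtain ⟨f, rfl⟩ := π_surjective x
  exact (Submodule.Quotient.eq _).mpr (mul_single_sub_self_mem_J he f)

section

noncomputable abbrev quotientNonUnitalRing : NonUnitalRing (MonoidAlgebra ℂ S ⧸ J S) :=
  π_surjective.nonUnitalRing (π S) (Submodule.Quotient.mk_zero _)
    (fun _ _ => Submodule.Quotient.mk_add _) (π_mul S) (fun _ => Submodule.Quotient.mk_neg _)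
    (fun _ _ => Submodule.Quotient.mk_sub _) (fun _ _ => Submodule.Quotient.mk_smul _ _ _)
    (fun _ _ => Submodule.Quotient.mk_smul _ _ _)

-- Local only: a global instance would give `A ⧸ J` a second, merely defeq, multiplication.
attribute [local instance] quotientNonUnitalRing

theorem eq_mul_sub_mul_of_conj_add_eq {s : S} {Υ d : MonoidAlgebra ℂ S ⧸ J S}
    (h : π S (single s 1) * Υ * π S (single (star s) 1) + d * π S (single (star s) 1) = Υ) :
    d = Υ * π S (single s 1) - π S (single s 1) * Υ := by
  have hcancel (x : MonoidAlgebra ℂ S ⧸ J S) :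
      x * π S (single (star s) 1) * π S (single s 1) = x := by
    rw [mul_assoc, ← π_mul, single_mul_single, mul_one,
      mul_π_single_of_isIdempotentElem (isIdempotentElem_star_mul_self s)]
  have hΥs : Υ * π S (single s 1) = π S (single s 1) * Υ + d := by
    conv_lhs => rw [← h]
    rw [add_mul, hcancel, hcancel]
  rw [hΥs, add_sub_cancel_left]

end

theorem fixed_point_implies_inner_general
    (D : MonoidAlgebra ℂ S →ₗ[ℂ] MonoidAlgebra ℂ S ⧸ J S)
    (φ : S → MonoidAlgebra ℂ S ⧸ J S)
    (hφ : ∀ s : S, φ s = D (single s (1 : ℂ)) * π S (single (InverseSemigroup.star s) (1 : ℂ)))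
    (Υ : MonoidAlgebra ℂ S ⧸ J S)
    (hΥ : ∀ s : S,
      π S (single s (1 : ℂ)) * Υ * π S (single (InverseSemigroup.star s) (1 : ℂ)) + φ s = Υ) :
    ∀ f : MonoidAlgebra ℂ S, D f = Υ * π S f - π S f * Υ := by
  obtain ⟨g, rfl⟩ := π_surjective Υ
  suffices D = (J S).mkQ ∘ₗ (LinearMap.mulLeft ℂ g - LinearMap.mulRight ℂ g) from
    fun f => by rw [this]; exact Submodule.Quotient.mk_sub (J S)
  ext s
  simp only [LinearMap.comp_apply, lsingle_apply, LinearMap.sub_apply, LinearMap.mulLeft_apply,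
    LinearMap.mulRight_apply, Submodule.mkQ_apply, Submodule.Quotient.mk_sub]
  exact eq_mul_sub_mul_of_conj_add_eq (hφ s ▸ hΥ s)

/-- with `D`, `φ` as before, if `Υ ∈ A ⧸ J` is a common fixed point of the
representation, i.e. `π(δ_s) · Υ · π(δ_{s*}) + φ(s) = Υ` for every `s ∈ S`, then `D` is the
inner derivation implemented by `-Υ`: `D(f) = Υ · π(f) - π(f) · Υ` for every `f ∈ A`. -/
theorem fixed_point_implies_inner
    (D : MonoidAlgebra ℂ S →ₗ[ℂ] MonoidAlgebra ℂ S ⧸ J S)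
    (hD : ∀ f g : MonoidAlgebra ℂ S, D (f * g) = π S f * D g + D f * π S g)
    (φ : S → MonoidAlgebra ℂ S ⧸ J S)
    (hφ : ∀ s : S, φ s = D (single s (1 : ℂ)) * π S (single (InverseSemigroup.star s) (1 : ℂ)))
    (Υ : MonoidAlgebra ℂ S ⧸ J S)
    (hΥ : ∀ s : S,
      π S (single s (1 : ℂ)) * Υ * π S (single (InverseSemigroup.star s) (1 : ℂ)) + φ s = Υ) :
    ∀ f : MonoidAlgebra ℂ S, D f = Υ * π S f - π S f * Υ :=
  fixed_point_implies_inner_general D φ hφ Υ hΥ
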